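/- The sequence E(n) = 2√π·(n/(2e))^{n/2}/Γ((n+1)/2) of entropies of round spheres is strictly decreasing: for every n ∈ ℕ, E(n+1) < E(n). In particular 2 = E(0) > E(1) > E(2) > E(3) > ⋯. -/

import Mathlib

/-!
Write `E` for the entropy as a function of a real dimension `x ≥ 0` and
`δ(x) = log E(x + 1) - log E(x)`. The functional equation of `Γ` makes `log E(x + 2) - log E(x)`
elementary, and `δ(x + 2) - δ(x)` is the increment over `[x, x + 1]` of
`D(y) = ((y + 2) log (y + 2) - y log y) / 2 - log (y + 1)`, which is strictly increasing since
`D'(y) = log (1 + 2 / y) / 2 - 1 / (y + 1) > 0`. Hence `δ(x) < δ(x + 2) ≤ δ(x + 4) ≤ ⋯`, while the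
log-convexity of `Γ`, in the form `√x Γ(x + 1/2) ≤ Γ(x + 1)`, gives `δ(y) ≤ 1 / (2y) → 0`.
So `δ(x) < 0`. With `0 ^ 0 = 1` all of this holds down to `x = 0`, so there is no base case.
-/

/-- Stone's formula for the entropy of the round `n`-sphere (with `0 ^ 0 = 1`). -/
noncomputable def sphereEntropy (n : ℕ) : ℝ :=
  2 * Real.sqrt Real.pi * ((n : ℝ) / (2 * Real.exp 1)) ^ ((n : ℝ) / 2) /
    Real.Gamma (((n : ℝ) + 1) / 2)

open Real Set Filter Topology

theorem Real.log_Gamma_add_half_le {x : ℝ} (hx : 0 < x) :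
    log (Gamma (x + 1 / 2)) ≤ log (Gamma (x + 1)) - log x / 2 := by
  have hconv := convexOn_log_Gamma.2 (mem_Ioi.2 hx) (mem_Ioi.2 (by linarith : (0 : ℝ) < x + 1))
    (by norm_num : (0 : ℝ) ≤ 1 / 2) (by norm_num : (0 : ℝ) ≤ 1 / 2) (by norm_num)
  have hrec : log (Gamma (x + 1)) = log x + log (Gamma x) := by
    rw [Gamma_add_one hx.ne', log_mul hx.ne' (Gamma_pos_of_pos hx).ne']
  simp only [Function.comp_apply, smul_eq_mul] at hconv
  rw [show 1 / 2 * x + 1 / 2 * (x + 1) = x + 1 / 2 by ring] at hconv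
  linarith

lemma div_rpow_half_self_pos {x c : ℝ} (hx : 0 ≤ x) (hc : 0 < c) : 0 < (x / c) ^ (x / 2) := by
  rcases hx.eq_or_lt with rfl | hx
  · simp
  · positivity

noncomputable def realSphereEntropy (x : ℝ) : ℝ :=
  2 * √π * (x / (2 * exp 1)) ^ (x / 2) / Gamma ((x + 1) / 2)

lemma sphereEntropy_eq_realSphereEntropy (n : ℕ) : sphereEntropy n = realSphereEntropy n := rfl

lemma realSphereEntropy_pos {x : ℝ} (hx : 0 ≤ x) : 0 < realSphereEntropy x := by
  have := div_rpow_half_self_pos hx (by positivity : 0 < 2 * exp 1)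
  have := Gamma_pos_of_pos (by positivity : 0 < (x + 1) / 2)
  unfold realSphereEntropy
  positivity

lemma log_realSphereEntropy {x : ℝ} (hx : 0 ≤ x) :
    log (realSphereEntropy x) =
      log (2 * √π) + x * (log x - log 2 - 1) / 2 - log (Gamma ((x + 1) / 2)) := by
  have hG : 0 < Gamma ((x + 1) / 2) := Gamma_pos_of_pos (by positivity)
  have hpow : log ((x / (2 * exp 1)) ^ (x / 2)) = x * (log x - log 2 - 1) / 2 := by
    rcases hx.eq_or_lt with rfl | hx
    · simp
    · rw [log_rpow (by positivity), log_div hx.ne' (by positivity),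
        log_mul two_ne_zero (exp_pos 1).ne', log_exp]
      ring
  have hp := div_rpow_half_self_pos hx (by positivity : 0 < 2 * exp 1)
  have hc : 0 < 2 * √π := by positivity
  rw [realSphereEntropy, log_div (by positivity) hG.ne', log_mul hc.ne' hp.ne', hpow]

noncomputable def logEntropyIncrement (y : ℝ) : ℝ :=
  ((y + 2) * log (y + 2) - y * log y) / 2 - log (y + 1)

lemma log_realSphereEntropy_add_two {x : ℝ} (hx : 0 ≤ x) :
    log (realSphereEntropy (x + 2)) = log (realSphereEntropy x) + logEntropyIncrement x - 1 := by
  have hG : Gamma ((x + 2 + 1) / 2) = (x + 1) / 2 * Gamma ((x + 1) / 2) := by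
    rw [← Gamma_add_one (by positivity)]
    congr 1
    ring
  rw [log_realSphereEntropy hx, log_realSphereEntropy (by positivity), hG,
    log_mul (by positivity) (Gamma_pos_of_pos (by positivity)).ne',
    log_div (by positivity) two_ne_zero, logEntropyIncrement]
  ring

lemma hasDerivAt_logEntropyIncrement {y : ℝ} (hy : 0 < y) :
    HasDerivAt logEntropyIncrement ((log (y + 2) - log y) / 2 - (y + 1)⁻¹) y := by
  have hshift : HasDerivAt (fun y => (y + 2) * log (y + 2)) (log (y + 2) + 1) y :=
    (hasDerivAt_mul_log (by positivity)).comp_add_const y 2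
  have hlog : HasDerivAt (fun y => log (y + 1)) (y + 1)⁻¹ y :=
    (hasDerivAt_log (by positivity)).comp_add_const y 1
  exact (((hshift.sub (hasDerivAt_mul_log hy.ne')).div_const 2).sub hlog).congr_deriv (by ring)

lemma strictMonoOn_logEntropyIncrement : StrictMonoOn logEntropyIncrement (Ici 0) := by
  refine strictMonoOn_of_deriv_pos (convex_Ici 0) ?_ fun y hy => ?_
  · have hlog : ContinuousOn (fun y : ℝ => log (y + 1)) (Ici 0) :=
      (continuous_add_const 1).continuousOn.log fun y hy => by
        have : (0 : ℝ) ≤ y := hy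
        positivity
    exact (((continuous_mul_log.comp (continuous_add_const 2)).sub
      continuous_mul_log).div_const 2).continuousOn.sub hlog
  · rw [interior_Ici, mem_Ioi] at hy
    rw [(hasDerivAt_logEntropyIncrement hy).deriv, sub_pos]
    have key := lt_log_one_add_of_pos (div_pos two_pos hy)
    rw [show 1 + 2 / y = (y + 2) / y by field_simp, log_div (by positivity) hy.ne',
      show 2 * (2 / y) / (2 / y + 2) = 2 * (y + 1)⁻¹ by field_simp; ring] at key
    linarith

lemma log_realSphereEntropy_add_one_sub_le {y : ℝ} (hy : 0 < y) :
    log (realSphereEntropy (y + 1)) - log (realSphereEntropy y) ≤ (2 * y)⁻¹ := by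
  have hGamma := log_Gamma_add_half_le (half_pos hy)
  rw [log_div hy.ne' two_ne_zero] at hGamma
  have hlog : (y + 1) * (log (y + 1) - log y) ≤ 1 + y⁻¹ := by
    have := log_le_sub_one_of_pos (by positivity : 0 < (y + 1) / y)
    rw [log_div (by positivity) hy.ne'] at this
    calc (y + 1) * (log (y + 1) - log y) ≤ (y + 1) * ((y + 1) / y - 1) := by gcongr
      _ = 1 + y⁻¹ := by field_simp; ring
  rw [log_realSphereEntropy hy.le, log_realSphereEntropy (by positivity),
    show (y + 1 + 1) / 2 = y / 2 + 1 by ring, show (y + 1) / 2 = y / 2 + 1 / 2 by ring, mul_inv]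
  linarith

theorem realSphereEntropy_add_one_lt {x : ℝ} (hx : 0 ≤ x) :
    realSphereEntropy (x + 1) < realSphereEntropy x := by
  set δ : ℝ → ℝ := fun y => log (realSphereEntropy (y + 1)) - log (realSphereEntropy y) with hδ
  have hstep : ∀ y, 0 ≤ y → δ y < δ (y + 2) := fun y hy => by
    have hy2 := log_realSphereEntropy_add_two hy
    have hy3 := log_realSphereEntropy_add_two (by positivity : 0 ≤ y + 1)
    have hinc := strictMonoOn_logEntropyIncrement (mem_Ici.2 hy)
      (mem_Ici.2 (by positivity : 0 ≤ y + 1)) (lt_add_one y)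
    rw [show y + 1 + 2 = y + 2 + 1 by ring] at hy3
    simp only [hδ]
    linarith
  have hnonpos : δ (x + 2) ≤ 0 := by
    have hmono : Monotone fun m : ℕ => δ (x + 2 + 2 * m) := monotone_nat_of_le_succ fun m => by
      convert (hstep (x + 2 + 2 * m) (by positivity)).le using 2
      push_cast
      ring
    have hlim : Tendsto (fun m : ℕ => (2 * (x + 2 + 2 * m))⁻¹) atTop (𝓝 0) :=
      tendsto_inv_atTop_zero.comp <| Tendsto.const_mul_atTop two_pos <|
        tendsto_atTop_add_const_left _ _ <|
          tendsto_natCast_atTop_atTop.const_mul_atTop two_pos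
    refine ge_of_tendsto' hlim fun m => ?_
    calc δ (x + 2) ≤ δ (x + 2 + 2 * m) := by simpa using hmono (Nat.zero_le m)
      _ ≤ _ := log_realSphereEntropy_add_one_sub_le (by positivity)
  have hneg : δ x < 0 := (hstep x hx).trans_le hnonpos
  rw [← log_lt_log_iff (realSphereEntropy_pos (by positivity)) (realSphereEntropy_pos hx)]
  linarith

theorem sphereEntropy_strictAnti : ∀ n : ℕ, sphereEntropy (n + 1) < sphereEntropy n := by
  intro n
  rw [sphereEntropy_eq_realSphereEntropy, sphereEntropy_eq_realSphereEntropy, Nat.cast_add_one]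
  exact realSphereEntropy_add_one_lt n.cast_nonneg
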